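/- arXiv:1408.5711 — 9 statements merged into one kernel-verified Lean document; each statement's English description precedes it below -/
import Mathlib

section
/- For every natural number n, one has (n+1)! · C_n = ∏_{j=1}^{n} (4j − 2), i.e., the n-th Catalan number equals the product 2·6·10···(4n−2) divided by (n+1)!. (Euler's product formula, 1751.) -/
open Finset

/- Both sides satisfy the recursion `a (n+1) = (4n+2) · a n`: for `n! · binom(2n, n)` this is
`(n+1) · binom(2n+2, n+1) = 2(2n+1) · binom(2n, n)`, and `(n+1) · Cₙ = binom(2n, n)`. -/

theorem Nat.factorial_mul_centralBinom (n : ℕ) :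
    n.factorial * n.centralBinom = ∏ j ∈ Icc 1 n, (4 * j - 2) := by
  induction n with
  | zero => simp
  | succ n ih =>
    rw [prod_Icc_succ_top (by omega), ← ih, Nat.factorial_succ, mul_comm (n + 1), mul_assoc,
      Nat.succ_mul_centralBinom_succ, show 4 * (n + 1) - 2 = 2 * (2 * n + 1) by omega]
    ring

/-- Euler's product formula (1751): `(n+1)! · Cₙ = ∏_{j=1}^{n} (4j − 2)`. -/
theorem catalan_euler_product (n : ℕ) :
    Nat.factorial (n + 1) * catalan n = ∏ j ∈ Finset.Icc 1 n, (4 * j - 2) := by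
  rw [← Nat.factorial_mul_centralBinom, ← succ_mul_catalan_eq_centralBinom,
    Nat.factorial_succ]
  ring
end

section
/- In the ring of formal power series ℤ⟦X⟧, the generating function C(X) = ∑_{n≥0} C_n X^n of the Catalan numbers satisfies the quadratic equation X·C(X)² + 1 = C(X). (Goldbach's equation 1 + xA(x) = A(x)^{1/2} in equivalent polynomial form.) -/
/-- Goldbach's equation (equivalent polynomial form):
the Catalan generating function `C(X) ∈ ℤ⟦X⟧` satisfies `X·C(X)² + 1 = C(X)`. -/
theorem catalan_gf_quadratic (C : PowerSeries ℤ)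
    (hC : C = PowerSeries.mk fun n => (catalan n : ℤ)) :
    PowerSeries.X * C ^ 2 + 1 = C := by
  subst hC
  ext n
  cases n with
  | zero => simp
  | succ n =>
    rw [map_add, PowerSeries.coeff_succ_X_mul, PowerSeries.coeff_one,
      if_neg (Nat.succ_ne_zero n), sq, PowerSeries.coeff_mul]
    simp [catalan_succ', Nat.cast_sum]
end

section
/- Let m ≥ 2 be a natural number. If a formal power series F over ℚ satisfies F = 1 + X·F^m, then for every natural number n the n-th coefficient of F equals binom(mn, n)/((m−1)n + 1), the n-th Fuss–Catalan number. (Liouville's solution of Grunert's equation via Lagrange inversion, 1843.) -/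
/-!
Let `R(r, n) = r/(mn+r) · C(mn+r, n)` be the Raney numbers. Since `F = 1 + X·Fᵐ`, every
power satisfies `F^(r+1) = F^r + X·F^(m+r)`, so the coefficients of the powers of `F` obey
the recurrence `[Xⁿ⁺¹] F^(r+1) = [Xⁿ⁺¹] F^r + [Xⁿ] F^(m+r)`; together with `[X⁰] F^r = 1`
and `[Xⁿ⁺¹] F⁰ = 0` this determines them. The Raney numbers satisfy the same recurrence (a
binomial identity), hence `[Xⁿ] F = R(1, n)`, which is the Fuss–Catalan number.
-/

open PowerSeries

/-- The `if` covers `r = n = 0`, where the formula would read `0/0` instead of `1`. -/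
def raney (m r n : ℕ) : ℚ :=
  if n = 0 then 1 else (r : ℚ) / (m * n + r) * (m * n + r).choose n

lemma raney_zero (m r : ℕ) : raney m r 0 = 1 := if_pos rfl

lemma raney_zero_succ (m n : ℕ) : raney m 0 (n + 1) = 0 := by simp [raney]

lemma raney_of_pos {m r n : ℕ} (h : 0 < m * n + r) :
    raney m r n = (r : ℚ) / (m * n + r) * (m * n + r).choose n := by
  rcases n with _ | n
  · have hr : (r : ℚ) ≠ 0 := by simp only [mul_zero, zero_add] at h; positivity
    simp [raney, hr]
  · simp [raney]

lemma raney_succ_succ {m : ℕ} (hm : 1 ≤ m) (r n : ℕ) :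
    raney m (r + 1) (n + 1) = raney m r (n + 1) + raney m (m + r) n := by
  rw [raney_of_pos (by omega : 0 < m * (n + 1) + (r + 1)),
    raney_of_pos (Nat.add_pos_left (Nat.mul_pos hm n.succ_pos) r),
    raney_of_pos (Nat.add_pos_right _ (by omega) : 0 < m * n + (m + r))]
  obtain ⟨N, hN⟩ : ∃ N, m * (n + 1) + r = N := ⟨_, rfl⟩
  have hnN : n + 1 ≤ N := hN ▸ le_add_right (Nat.le_mul_of_pos_left _ hm)
  rw [show m * (n + 1) + (r + 1) = N + 1 by omega,
    show m * n + (m + r) = N by rw [← hN]; ring, hN]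
  have hNq : (m : ℚ) * (n + 1) + r = N := by rw [← hN]; push_cast; ring
  -- all three binomials are rational multiples of `C(N, n)`
  have hsucc : ((N + 1).choose (n + 1) : ℚ) = (N + 1) * N.choose n / (n + 1) := by
    rw [eq_div_iff (by positivity)]
    exact_mod_cast (Nat.add_one_mul_choose_eq N n).symm
  have hright : (N.choose (n + 1) : ℚ) = N.choose n * (N - n) / (n + 1) := by
    rw [eq_div_iff (by positivity), ← Nat.cast_sub (by omega : n ≤ N)]
    exact_mod_cast Nat.choose_succ_right_eq N n
  have hN0 : (N : ℚ) ≠ 0 := by norm_cast; omega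
  push_cast
  rw [show (m : ℚ) * (n + 1) + (r + 1) = N + 1 by rw [← hNq]; ring, hNq,
    show (m : ℚ) * n + (m + r) = N by rw [← hNq]; ring, hsucc, hright]
  field_simp
  linear_combination -(N.choose n : ℚ) * hNq

lemma raney_one {m : ℕ} (hm : 1 ≤ m) (n : ℕ) :
    raney m 1 n = (m * n).choose n / (((m - 1) * n + 1 : ℕ) : ℚ) := by
  have hsub : m * n + 1 - n = (m - 1) * n + 1 := by
    have := Nat.le_mul_of_pos_left n hm
    rw [Nat.sub_mul, one_mul]
    omega
  have key : ((m * n).choose n : ℚ) * (m * n + 1) =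
      (m * n + 1).choose n * ((m - 1) * n + 1 : ℕ) := by
    rw [← hsub]
    exact_mod_cast Nat.choose_mul_succ_eq (m * n) n
  rw [raney_of_pos (Nat.succ_pos _), eq_div_iff (by positivity)]
  push_cast at key ⊢
  field_simp
  linear_combination -key

lemma constantCoeff_eq_one_of_eq_one_add_X_mul {R : Type*} [Semiring R] {F G : R⟦X⟧}
    (hF : F = 1 + X * G) : constantCoeff F = 1 := by
  simp [hF]

lemma pow_succ_eq_pow_add_X_mul_pow {R : Type*} [CommSemiring R] {m : ℕ} {F : R⟦X⟧}
    (hF : F = 1 + X * F ^ m) (r : ℕ) : F ^ (r + 1) = F ^ r + X * F ^ (m + r) := by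
  rw [pow_succ]
  nth_rw 2 [hF]
  ring

lemma coeff_pow_eq_raney {m : ℕ} (hm : 1 ≤ m) {F : ℚ⟦X⟧} (hF : F = 1 + X * F ^ m)
    (n r : ℕ) : coeff n (F ^ r) = raney m r n := by
  induction n generalizing r with
  | zero =>
    rw [coeff_zero_eq_constantCoeff_apply, map_pow, constantCoeff_eq_one_of_eq_one_add_X_mul hF,
      one_pow, raney_zero]
  | succ n ih =>
    induction r with
    | zero => rw [pow_zero, coeff_one, if_neg n.succ_ne_zero, raney_zero_succ]
    | succ r ihr =>
      rw [pow_succ_eq_pow_add_X_mul_pow hF, map_add, coeff_succ_X_mul, ihr, ih,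
        raney_succ_succ hm]

/-- Liouville's solution of Grunert's equation (1843): if `F ∈ ℚ⟦X⟧` satisfies
`F = 1 + X·Fᵐ` with `m ≥ 2`, then the `n`-th coefficient of `F` is the Fuss–Catalan
number `binom(mn, n)/((m−1)n + 1)`. -/
theorem fussCatalan_coeff (m : ℕ) (hm : 2 ≤ m) (F : PowerSeries ℚ)
    (hF : F = 1 + PowerSeries.X * F ^ m) (n : ℕ) :
    PowerSeries.coeff n F = (Nat.choose (m * n) n : ℚ) / (((m - 1) * n + 1 : ℕ) : ℚ) := by
  rw [← pow_one F, coeff_pow_eq_raney (by omega) hF, raney_one (by omega)]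
end

section
/- Let m ≥ 2 be a natural number, and let F ∈ ℚ⟦X⟧ be the formal power series whose n-th coefficient is binom(mn, n)/((m−1)n + 1). Then F satisfies the functional equation F = 1 + X·F^m, equivalently F^m = (F − 1)/X. (Grunert's equation for the Fuss–Catalan generating function, 1841.) -/
/-!
Put `B_x = ∑ₙ C(x + mn, n) Xⁿ`. Pascal's rule reads `B_{x+1} = B_x + X B_{x+m}` and absorption
reads `B_0 = 1 + m X B_{m-1}`. For `F = B_1 - m X B_m`, whose coefficients are the Fuss–Catalan
numbers, the differences `F B_x - B_{x+1}` satisfy the homogeneous versions of both recurrences,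
so each is divisible by every power of `X` and `F B_x = B_{x+1}`. Hence `B_x = Fˣ B_0`, and
Pascal's rule at `x = 0`, divided by the unit `B_0`, is `F = 1 + X Fᵐ`.
-/

open PowerSeries

namespace FussCatalan

lemma mul_choose_eq_choose_succ (m n : ℕ) :
    m * (m - 1 + m * n).choose n = (m * (n + 1)).choose (n + 1) := by
  rcases m with _ | m
  · simp
  · have h := Nat.add_one_mul_choose_eq (m + (m + 1) * n) n
    rw [show m + (m + 1) * n + 1 = (m + 1) * (n + 1) by ring] at h
    apply Nat.eq_of_mul_eq_mul_right (Nat.add_one_pos n)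
    rw [← h, Nat.add_sub_cancel]
    ring

lemma choose_mul_eq_choose_succ_mul (m n : ℕ) (hm : 1 ≤ m) :
    (m * (n + 1)).choose n * ((m - 1) * (n + 1) + 1) = (m * (n + 1)).choose (n + 1) * (n + 1) := by
  rw [Nat.choose_succ_right_eq]
  congr 1
  obtain ⟨m, rfl⟩ := Nat.exists_eq_add_of_le' hm
  rw [Nat.add_sub_cancel, add_mul, one_mul]
  omega

variable {R : Type*} [CommRing R]

lemma eq_zero_of_recurrence {D : ℕ → R⟦X⟧} {c : R} {k m : ℕ}
    (h0 : D 0 = X * (C c * D k)) (hsucc : ∀ x, D (x + 1) = D x + X * D (x + m)) (x : ℕ) :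
    D x = 0 := by
  have hdvd : ∀ N x, X ^ N ∣ D x := by
    intro N
    induction N with
    | zero => simp
    | succ N ih =>
      intro x
      rw [pow_succ']
      induction x with
      | zero => rw [h0]; exact mul_dvd_mul_left X ((ih k).mul_left _)
      | succ x ihx => rw [hsucc]; exact dvd_add ihx (mul_dvd_mul_left X (ih _))
  ext n
  exact X_pow_dvd_iff.mp (hdvd (n + 1) x) n n.lt_succ_self

variable (R) in
noncomputable def chooseSeries (m x : ℕ) : R⟦X⟧ := mk fun n => ((x + m * n).choose n : R)

lemma coeff_chooseSeries (m x n : ℕ) :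
    coeff n (chooseSeries R m x) = ((x + m * n).choose n : R) :=
  coeff_mk _ _

lemma chooseSeries_succ (m x : ℕ) :
    chooseSeries R m (x + 1) = chooseSeries R m x + X * chooseSeries R m (x + m) := by
  ext (_ | n)
  · simp [chooseSeries]
  · rw [map_add, coeff_succ_X_mul]
    simp only [coeff_chooseSeries]
    rw [show x + 1 + m * (n + 1) = x + m * (n + 1) + 1 by ring, Nat.choose_succ_succ',
      show x + m * (n + 1) = x + m + m * n by ring]
    push_cast
    ring

lemma chooseSeries_zero (m : ℕ) :
    chooseSeries R m 0 = 1 + C (m : R) * X * chooseSeries R m (m - 1) := by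
  ext (_ | n)
  · simp [chooseSeries]
  · rw [map_add, mul_comm (C _), mul_assoc, coeff_succ_X_mul, coeff_C_mul]
    simp only [coeff_chooseSeries, coeff_one]
    rw [zero_add, ← mul_choose_eq_choose_succ]
    push_cast
    simp

variable (R) in
noncomputable def fussCatalanSeries (m : ℕ) : R⟦X⟧ :=
  chooseSeries R m 1 - C (m : R) * X * chooseSeries R m m

lemma fussCatalanSeries_mul_chooseSeries (m x : ℕ) :
    fussCatalanSeries R m * chooseSeries R m x = chooseSeries R m (x + 1) := by
  set F := fussCatalanSeries R m
  set B := chooseSeries R m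
  have h0 : F * B 0 - B 1 = X * (C (m : R) * (F * B (m - 1) - B (m - 1 + 1))) := by
    have hm : C (m : R) * B (m - 1 + 1) = C (m : R) * B m := by rcases m with _ | m <;> simp
    have hB0 : B 0 = 1 + C (m : R) * X * B (m - 1) := chooseSeries_zero m
    have hF : F = B 1 - C (m : R) * X * B m := rfl
    rw [hB0, hF]
    linear_combination X * hm
  have hsucc (x : ℕ) : F * B (x + 1) - B (x + 1 + 1)
      = F * B x - B (x + 1) + X * (F * B (x + m) - B (x + m + 1)) := by
    rw [show x + m + 1 = x + 1 + m by ring]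
    linear_combination F * chooseSeries_succ (R := R) m x - chooseSeries_succ (R := R) m (x + 1)
  exact sub_eq_zero.mp (eq_zero_of_recurrence (D := fun x => F * B x - B (x + 1)) h0 hsucc x)

lemma fussCatalanSeries_pow_mul_chooseSeries_zero (m x : ℕ) :
    fussCatalanSeries R m ^ x * chooseSeries R m 0 = chooseSeries R m x := by
  induction x with
  | zero => simp
  | succ x ih => rw [pow_succ', mul_assoc, ih, fussCatalanSeries_mul_chooseSeries]

theorem fussCatalanSeries_eq_one_add_X_mul_pow (m : ℕ) :
    fussCatalanSeries R m = 1 + X * fussCatalanSeries R m ^ m := by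
  have hunit : IsUnit (chooseSeries R m 0) := by
    simp [isUnit_iff_constantCoeff, chooseSeries]
  apply hunit.mul_left_injective
  have h := chooseSeries_succ (R := R) m 0
  simp only [zero_add] at h
  rw [← fussCatalanSeries_pow_mul_chooseSeries_zero m 1,
    ← fussCatalanSeries_pow_mul_chooseSeries_zero m m, pow_one] at h
  linear_combination h

theorem coeff_fussCatalanSeries {K : Type*} [Field K] [CharZero K] (m n : ℕ) (hm : 1 ≤ m) :
    coeff n (fussCatalanSeries K m) = ((m * n).choose n : K) / (((m - 1) * n + 1 : ℕ) : K) := by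
  rcases n with _ | n
  · simp [fussCatalanSeries, chooseSeries]
  rw [eq_div_iff (Nat.cast_ne_zero.mpr (Nat.succ_ne_zero _)), fussCatalanSeries, map_sub,
    mul_comm (C _), mul_assoc, coeff_succ_X_mul, coeff_C_mul, coeff_chooseSeries,
    coeff_chooseSeries, show 1 + m * (n + 1) = m * (n + 1) + 1 by ring,
    show m + m * n = m * (n + 1) by ring, Nat.choose_succ_succ']
  have h : ((m * (n + 1)).choose n : K) * ((m - 1 : ℕ) * (n + 1) + 1 : K)
      = (m * (n + 1)).choose (n + 1) * (n + 1) := by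
    exact_mod_cast choose_mul_eq_choose_succ_mul m n hm
  push_cast [Nat.cast_sub hm] at h ⊢
  linear_combination (1 - (m : K)) * h

end FussCatalan

/-- Grunert's equation (1841): the generating function `F ∈ ℚ⟦X⟧` of the Fuss–Catalan
numbers `binom(mn, n)/((m−1)n + 1)`, for `m ≥ 2`, satisfies `F = 1 + X·Fᵐ`,
equivalently `X·Fᵐ = F − 1`. -/
theorem fussCatalan_gf_eq (m : ℕ) (hm : 2 ≤ m)
    (F : PowerSeries ℚ)
    (hF : F = PowerSeries.mk fun n => (Nat.choose (m * n) n : ℚ) / (((m - 1) * n + 1 : ℕ) : ℚ)) :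
    F = 1 + PowerSeries.X * F ^ m ∧ PowerSeries.X * F ^ m = F - 1 := by
  have hF' : F = FussCatalan.fussCatalanSeries ℚ m := by
    ext n
    rw [hF, coeff_mk, FussCatalan.coeff_fussCatalanSeries m n (by omega)]
  have h := FussCatalan.fussCatalanSeries_eq_one_add_X_mul_pow (R := ℚ) m
  rw [hF']
  exact ⟨h, eq_sub_of_add_eq' h.symm⟩
end

section
/- Let m, n be natural numbers with n ≤ m and m + n > 0. Let B be the set of lists of Booleans containing exactly m values true and n values false such that in every nonempty prefix the number of true entries strictly exceeds the number of false entries. Then (m + n) · |B| = (m − n) · binom(m + n, m). (Counting form of Bertrand's ballot theorem, 1887: the proportion of vote orderings in which the winning candidate with m votes always strictly leads the candidate with n votes is (m−n)/(m+n).) -/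
/-!
Sort the ballot sequences with `m + 1` votes for the winner and `n + 1` for the loser, `n < m`,
by their last vote: deleting it leaves a ballot sequence of type `(m, n + 1)` or `(m + 1, n)`,
and every such sequence extends back. So the counts obey Pascal's recurrence, with value `1`
when `n = 0` and `0` when `m ≤ n`; the expression `(m - n) / (m + n) * binom(m + n, m)` obeys
the same recurrence by Pascal's rule and `(m + 1) * binom(N, m + 1) = (n + 1) * binom(N, m)`.
-/

open List

def StaysAhead (l : List Bool) : Prop :=
  ∀ j : ℕ, 1 ≤ j → j ≤ l.length → (l.take j).count false < (l.take j).count true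

def ballotSeqs (m n : ℕ) : Set (List Bool) :=
  {l | l.count true = m ∧ l.count false = n ∧ StaysAhead l}

theorem staysAhead_append_singleton {l : List Bool} {b : Bool} :
    StaysAhead (l ++ [b]) ↔
      StaysAhead l ∧ (l ++ [b]).count false < (l ++ [b]).count true := by
  constructor
  · intro h
    refine ⟨fun j hj hjl => ?_, ?_⟩
    · have hjl' : j ≤ (l ++ [b]).length := by rw [length_append, length_singleton]; omega
      simpa only [take_append_of_le_length hjl] using h j hj hjl'
    · simpa only [take_length] using h (l ++ [b]).length (by simp) le_rfl
  · rintro ⟨hl, hlast⟩ j hj hjl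
    rcases le_or_gt j l.length with hle | hgt
    · rw [take_append_of_le_length hle]
      exact hl j hj hle
    · rwa [take_of_length_le (by rw [length_append, length_singleton]; omega)]

theorem length_of_mem_ballotSeqs {m n : ℕ} {l : List Bool} (hl : l ∈ ballotSeqs m n) :
    l.length = m + n := by
  rw [← count_true_add_count_false, hl.1, hl.2.1]

theorem ballotSeqs_finite (m n : ℕ) : (ballotSeqs m n).Finite :=
  (List.finite_length_eq Bool (m + n)).subset fun _ => length_of_mem_ballotSeqs

theorem ballotSeqs_zero_right (m : ℕ) : ballotSeqs m 0 = {replicate m true} := by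
  ext l
  constructor
  · rintro ⟨htrue, hfalse, -⟩
    have hlen : l.length = m := by rw [← count_true_add_count_false, htrue, hfalse, add_zero]
    refine eq_replicate_iff.mpr ⟨hlen, fun b hb => ?_⟩
    cases b
    · exact absurd hb (count_eq_zero.mp hfalse)
    · rfl
  · rintro rfl
    refine ⟨by simp, by simp [count_replicate], fun j hj hjm => ?_⟩
    rw [length_replicate] at hjm
    rw [take_replicate, count_replicate_self, count_eq_zero_of_not_mem (by simp)]
    omega

theorem ballotSeqs_eq_empty_of_le {m n : ℕ} (hmn : m ≤ n) (hn : 0 < n) :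
    ballotSeqs m n = ∅ := by
  refine Set.eq_empty_of_forall_notMem fun l hl => ?_
  have hlen := length_of_mem_ballotSeqs hl
  obtain ⟨htrue, hfalse, hahead⟩ := hl
  have := hahead l.length (by omega) le_rfl
  rw [take_length] at this
  omega

theorem append_true_mem_ballotSeqs_iff {m n : ℕ} {l : List Bool} :
    l ++ [true] ∈ ballotSeqs (m + 1) n ↔ l ∈ ballotSeqs m n ∧ n < m + 1 := by
  simp only [ballotSeqs, Set.mem_ofPred_eq, staysAhead_append_singleton, count_append,
    count_singleton]
  grind

theorem append_false_mem_ballotSeqs_iff {m n : ℕ} {l : List Bool} :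
    l ++ [false] ∈ ballotSeqs m (n + 1) ↔ l ∈ ballotSeqs m n ∧ n + 1 < m := by
  simp only [ballotSeqs, Set.mem_ofPred_eq, staysAhead_append_singleton, count_append,
    count_singleton]
  grind

theorem ballotSeqs_succ_succ {m n : ℕ} (hnm : n < m) :
    ballotSeqs (m + 1) (n + 1) =
      (· ++ [true]) '' ballotSeqs m (n + 1) ∪ (· ++ [false]) '' ballotSeqs (m + 1) n := by
  ext l
  rcases eq_nil_or_concat' l with rfl | ⟨l, b, rfl⟩
  · simp [ballotSeqs]
  · cases b <;> simp [append_true_mem_ballotSeqs_iff, append_false_mem_ballotSeqs_iff, hnm]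

theorem ncard_ballotSeqs_succ_succ {m n : ℕ} (hnm : n < m) :
    (ballotSeqs (m + 1) (n + 1)).ncard =
      (ballotSeqs m (n + 1)).ncard + (ballotSeqs (m + 1) n).ncard := by
  have append_injective (b : Bool) : Function.Injective (· ++ [b]) :=
    fun _ _ h => append_cancel_right h
  have last_differs : Disjoint ((· ++ [true]) '' ballotSeqs m (n + 1))
      ((· ++ [false]) '' ballotSeqs (m + 1) n) := by
    rw [Set.disjoint_left]
    rintro _ ⟨l, -, rfl⟩ ⟨l', -, h⟩
    simpa using congrArg getLast? h
  rw [ballotSeqs_succ_succ hnm, Set.ncard_union_eq last_differs ((ballotSeqs_finite _ _).image _)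
    ((ballotSeqs_finite _ _).image _), Set.ncard_image_of_injective _ (append_injective true),
    Set.ncard_image_of_injective _ (append_injective false)]

theorem ballot_formula_succ_succ {m n a b : ℕ} (hnm : n < m)
    (ha : (m + (n + 1)) * a = (m - (n + 1)) * (m + (n + 1)).choose m)
    (hb : (m + 1 + n) * b = (m + 1 - n) * (m + 1 + n).choose (m + 1)) :
    (m + 1 + (n + 1)) * (a + b) = (m + 1 - (n + 1)) * (m + 1 + (n + 1)).choose (m + 1) := by
  rw [← add_assoc] at ha
  rw [add_right_comm] at hb
  rw [Nat.add_sub_add_right, show m + 1 + (n + 1) = m + n + 2 by ring]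
  have pascal : (m + n + 2).choose (m + 1) = (m + n + 1).choose m + (m + n + 1).choose (m + 1) :=
    Nat.choose_succ_succ' _ _
  have absorption : (m + n + 1).choose (m + 1) * (m + 1) = (m + n + 1).choose m * (n + 1) := by
    rw [Nat.choose_succ_right_eq, show m + n + 1 - m = n + 1 by omega]
  refine Nat.eq_of_mul_eq_mul_left (show 0 < m + n + 1 by omega) ?_
  calc (m + n + 1) * ((m + n + 2) * (a + b))
      = (m + n + 2) * ((m + n + 1) * a + (m + n + 1) * b) := by ring
    _ = (m + n + 2) * ((m - (n + 1)) * (m + n + 1).choose m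
          + (m + 1 - n) * (m + n + 1).choose (m + 1)) := by rw [ha, hb]
    _ = (m + n + 1) * ((m - n) * (m + n + 2).choose (m + 1)) := by
      rw [pascal]
      have hnm' : n ≤ m + 1 := by omega
      zify [Nat.succ_le_of_lt hnm, hnm.le, hnm'] at absorption ⊢
      linear_combination 2 * absorption

theorem add_mul_ncard_ballotSeqs (m n : ℕ) :
    (m + n) * (ballotSeqs m n).ncard = (m - n) * (m + n).choose m := by
  induction m generalizing n with
  | zero =>
    rcases Nat.eq_zero_or_pos n with rfl | hn
    · simp
    · simp [ballotSeqs_eq_empty_of_le (Nat.zero_le n) hn]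
  | succ m ihm =>
    induction n with
    | zero => simp [ballotSeqs_zero_right]
    | succ n ihn =>
      rcases lt_or_ge n m with hnm | hmn
      · rw [ncard_ballotSeqs_succ_succ hnm]
        exact ballot_formula_succ_succ hnm (ihm (n + 1)) ihn
      · simp [ballotSeqs_eq_empty_of_le (Nat.succ_le_succ hmn) n.succ_pos,
          Nat.sub_eq_zero_of_le hmn]

theorem ballot_bertrand_general (m n : ℕ) :
    (m + n) * {l : List Bool | l.count true = m ∧ l.count false = n ∧
        ∀ j : ℕ, 1 ≤ j → j ≤ l.length →
          (l.take j).count false < (l.take j).count true}.ncard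
      = (m - n) * Nat.choose (m + n) m :=
  add_mul_ncard_ballotSeqs m n

/-- Bertrand's ballot theorem (1887), counting form: with `n ≤ m` and `m + n > 0`,
if `B` is the set of Boolean lists with exactly `m` trues and `n` falses in which every
nonempty prefix has strictly more trues than falses, then
`(m + n) · |B| = (m − n) · binom(m + n, m)`. -/
theorem ballot_bertrand (m n : ℕ) (hnm : n ≤ m) (hpos : 0 < m + n) :
    (m + n) * {l : List Bool | l.count true = m ∧ l.count false = n ∧
        ∀ j : ℕ, 1 ≤ j → j ≤ l.length →
          (l.take j).count false < (l.take j).count true}.ncard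
      = (m - n) * Nat.choose (m + n) m :=
  ballot_bertrand_general m n
end

section
/- Let k ≥ 1 and m, n be natural numbers with k·n ≤ m and m + n > 0. Let B_k be the set of lists of Booleans containing exactly m values true and n values false such that in every nonempty prefix the number of true entries strictly exceeds k times the number of false entries. Then (m + n) · |B_k| = (m − k·n) · binom(m + n, m). (Barbier's generalization of the ballot problem, 1887.) -/
/-!
Sort ballot sequences by their last vote. Deleting the last vote of a ballot sequence keeps
every proper prefix, so when the full-list condition `k * (n + 1) < m + 1` holds, the ballot
sequences with `m + 1` and `n + 1` votes are exactly those with `m`, `n + 1` votes followed by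
`true` and those with `m + 1`, `n` votes followed by `false`. Their counts thus satisfy Pascal's
recursion, and so does `(m - k n) / (m + n) * binom(m + n, m)`. When `m ≤ k n` the truncated
difference `m - k n` is zero, and so is the count, since the full list violates the condition.
-/

def IsBallot (k : ℕ) (l : List Bool) : Prop :=
  ∀ j : ℕ, 1 ≤ j → j ≤ l.length → k * (l.take j).count false < (l.take j).count true

def ballotSet (k m n : ℕ) : Set (List Bool) :=
  {l | l.count true = m ∧ l.count false = n ∧ IsBallot k l}

theorem isBallot_append_singleton {k : ℕ} {l : List Bool} {b : Bool} :
    IsBallot k (l ++ [b]) ↔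
      IsBallot k l ∧ k * (l ++ [b]).count false < (l ++ [b]).count true := by
  constructor
  · intro h
    refine ⟨fun j hj hjl => ?_, ?_⟩
    · simpa [List.take_append_of_le_length hjl] using h j hj (by simp; omega)
    · simpa [List.take_of_length_le] using h (l.length + 1) (by omega) (by simp)
  · rintro ⟨h, hlast⟩ j hj hjl
    rcases Nat.lt_or_ge j (l.length + 1) with hlt | hge
    · rw [List.take_append_of_le_length (by omega)]
      exact h j hj (by omega)
    · rwa [List.take_of_length_le (by simp; omega)]

namespace ballotSet

theorem length_eq {k m n : ℕ} {l : List Bool} (hl : l ∈ ballotSet k m n) :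
    l.length = m + n := by
  rw [← List.count_true_add_count_false, hl.1, hl.2.1]

theorem finite (k m n : ℕ) : (ballotSet k m n).Finite :=
  (List.finite_length_eq Bool (m + n)).subset fun _ => length_eq

theorem eq_empty {k m n : ℕ} (hm : m ≤ k * n) (hpos : 0 < m + n) : ballotSet k m n = ∅ := by
  refine Set.eq_empty_of_forall_notMem fun l hl => ?_
  have hlast := hl.2.2 l.length (by rw [length_eq hl]; omega) le_rfl
  rw [List.take_length, hl.1, hl.2.1] at hlast
  omega

theorem zero_right (k m : ℕ) : ballotSet k m 0 = {List.replicate m true} := by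
  ext l
  constructor
  · rintro ⟨htrue, hfalse, -⟩
    refine List.eq_replicate_iff.2 ⟨?_, fun b hb => ?_⟩
    · rw [← List.count_true_add_count_false, htrue, hfalse, add_zero]
    · cases b
      exacts [absurd hb (List.count_eq_zero.1 hfalse), rfl]
  · rintro rfl
    refine ⟨by simp, by simp [List.count_replicate], fun j hj hjm => ?_⟩
    simp only [List.length_replicate] at hjm
    simp only [List.take_replicate, List.count_replicate_self, List.count_replicate, beq_false,
      Bool.not_true, Bool.false_eq_true, ↓reduceIte, mul_zero, lt_inf_iff]
    omega

theorem append_true_mem_iff {k m n : ℕ} {l : List Bool} (h : k * n < m + 1) :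
    l ++ [true] ∈ ballotSet k (m + 1) n ↔ l ∈ ballotSet k m n := by
  simp only [ballotSet, Set.mem_ofPred_eq, isBallot_append_singleton, List.count_append,
    List.count_singleton_self, List.count_singleton]
  grind

theorem append_false_mem_iff {k m n : ℕ} {l : List Bool} (h : k * (n + 1) < m) :
    l ++ [false] ∈ ballotSet k m (n + 1) ↔ l ∈ ballotSet k m n := by
  simp only [ballotSet, Set.mem_ofPred_eq, isBallot_append_singleton, List.count_append,
    List.count_singleton_self, List.count_singleton]
  grind

theorem succ_succ {k m n : ℕ} (h : k * (n + 1) < m + 1) :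
    ballotSet k (m + 1) (n + 1) =
      (· ++ [true]) '' ballotSet k m (n + 1) ∪ (· ++ [false]) '' ballotSet k (m + 1) n := by
  ext l
  rcases l.eq_nil_or_concat' with rfl | ⟨l, b | b, rfl⟩
  · simp [ballotSet]
  · simp [append_false_mem_iff h]
  · simp [append_true_mem_iff h]

theorem ncard_succ_succ {k m n : ℕ} (h : k * (n + 1) < m + 1) :
    (ballotSet k (m + 1) (n + 1)).ncard =
      (ballotSet k m (n + 1)).ncard + (ballotSet k (m + 1) n).ncard := by
  have hdisj : Disjoint ((· ++ [true]) '' ballotSet k m (n + 1))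
      ((· ++ [false]) '' ballotSet k (m + 1) n) := by
    rw [Set.disjoint_left]
    rintro _ ⟨_, -, rfl⟩ ⟨_, -, heq⟩
    simpa using congrArg List.getLast? heq
  rw [succ_succ h, Set.ncard_union_eq hdisj ((finite _ _ _).image _) ((finite _ _ _).image _),
    Set.ncard_image_of_injective _ (List.append_left_injective _),
    Set.ncard_image_of_injective _ (List.append_left_injective _)]

end ballotSet

theorem barbier_formula_succ_succ {k m n A B : ℕ} (h : k * (n + 1) < m + 1)
    (hA : (m + (n + 1)) * A = (m - k * (n + 1)) * (m + (n + 1)).choose m)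
    (hB : (m + 1 + n) * B = (m + 1 - k * n) * (m + 1 + n).choose (m + 1)) :
    (m + 1 + (n + 1)) * (A + B) = (m + 1 - k * (n + 1)) * (m + 1 + (n + 1)).choose (m + 1) := by
  rw [show m + (n + 1) = m + n + 1 by ring] at hA
  rw [show m + 1 + n = m + n + 1 by ring] at hB
  rw [show m + 1 + (n + 1) = m + n + 1 + 1 by ring]
  have hleft := Nat.add_one_mul_choose_eq (m + n + 1) m
  have hright := Nat.choose_mul_succ_eq (m + n + 1) (m + 1)
  rw [show m + n + 1 + 1 - (m + 1) = n + 1 by omega] at hright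
  apply Nat.eq_of_mul_eq_mul_left (show 0 < m + n + 1 by omega)
  have hkn : k * n ≤ m + 1 := (Nat.mul_le_mul_left k n.le_succ).trans h.le
  zify [h.le, hkn, show k * (n + 1) ≤ m by omega] at hA hB hleft hright ⊢
  linear_combination ((m : ℤ) + n + 2) * hA + ((m : ℤ) + n + 2) * hB +
      ((m : ℤ) - k * (n + 1)) * hleft + ((m : ℤ) + 1 - k * n) * hright

theorem ballotSet_ncard (k m n : ℕ) :
    (m + n) * (ballotSet k m n).ncard = (m - k * n) * (m + n).choose m := by
  induction n generalizing m with
  | zero => simp [ballotSet.zero_right]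
  | succ n ihn =>
    induction m with
    | zero => simp [ballotSet.eq_empty (Nat.zero_le _) (by omega : 0 < 0 + (n + 1))]
    | succ m ihm =>
      by_cases h : k * (n + 1) < m + 1
      · rw [ballotSet.ncard_succ_succ h]
        exact barbier_formula_succ_succ h ihm (ihn (m + 1))
      · rw [ballotSet.eq_empty (by omega) (by omega), Nat.sub_eq_zero_of_le (by omega)]
        simp

theorem ballot_barbier_general (k m n : ℕ) :
    (m + n) * {l : List Bool | l.count true = m ∧ l.count false = n ∧
        ∀ j : ℕ, 1 ≤ j → j ≤ l.length →
          k * (l.take j).count false < (l.take j).count true}.ncard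
      = (m - k * n) * Nat.choose (m + n) m :=
  ballotSet_ncard k m n

/-- Barbier's generalization of the ballot problem (1887): with `k ≥ 1`, `k·n ≤ m`
and `m + n > 0`, if `B_k` is the set of Boolean lists with exactly `m` trues and `n`
falses in which every nonempty prefix has strictly more trues than `k` times the
number of falses, then `(m + n) · |B_k| = (m − k·n) · binom(m + n, m)`. -/
theorem ballot_barbier (k m n : ℕ) (hk : 1 ≤ k) (hkn : k * n ≤ m) (hpos : 0 < m + n) :
    (m + n) * {l : List Bool | l.count true = m ∧ l.count false = n ∧
        ∀ j : ℕ, 1 ≤ j → j ≤ l.length →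
          k * (l.take j).count false < (l.take j).count true}.ncard
      = (m - k * n) * Nat.choose (m + n) m :=
  ballot_barbier_general k m n
end

section
/- Let a, b be positive integers and N a natural number. The number of sequences s : {0, …, N−1} → {−1, +1} such that a + s_0 + ⋯ + s_{N−1} = b and there exists j ≤ N with a + s_0 + ⋯ + s_{j−1} = 0 (the walk started at a visits 0) is equal to the number of sequences s : {0, …, N−1} → {−1, +1} with s_0 + ⋯ + s_{N−1} = a + b (walks from −a to b). (Mirimanoff's reflection principle, 1923.) -/
/-! Negating the steps of a walk from `a` up to its first visit to `0` turns a walk from `a` to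
`b` through `0` into a walk from `-a` to `b` that first visits `0` at the same time. Conversely, a
walk from `-a < 0` to `b > 0` whose up-steps are at most `1` must visit `0`, and the same
reflection sends it back. So reflecting at the first visit to `0` is a bijection between the two
sets of walks. On step lists, a visit of the walk from `a` to `0` is a prefix with sum `-a`. -/

namespace List

variable {α : Type*} [AddCommGroup α]

def negPrefix (j : ℕ) (s : List α) : List α :=
  (s.take j).map (fun x => -x) ++ s.drop j

theorem length_negPrefix (j : ℕ) (s : List α) : (negPrefix j s).length = s.length := by
  simp only [negPrefix, length_append, length_map, length_take, length_drop]
  omega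

theorem sum_negPrefix (j : ℕ) (s : List α) :
    (negPrefix j s).sum = (s.drop j).sum - (s.take j).sum := by
  rw [negPrefix, sum_append, ← sum_neg]
  abel

theorem take_negPrefix {i j : ℕ} (hij : i ≤ j) (s : List α) :
    (negPrefix j s).take i = (s.take i).map (fun x => -x) := by
  simp only [negPrefix, map_take, take_append, take_take, Nat.min_eq_left hij, length_take,
    length_map, append_right_eq_self, take_eq_nil_iff, drop_eq_nil_iff]
  omega

theorem negPrefix_negPrefix (j : ℕ) (s : List α) : negPrefix j (negPrefix j s) = s := by
  rcases le_total j s.length with h | h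
  · simp [negPrefix, h]
  · simp [negPrefix, take_of_length_le, drop_of_length_le, h]

theorem forall_mem_negPrefix {p : α → Prop} (hp : ∀ x, p x → p (-x)) {s : List α}
    (hs : ∀ x ∈ s, p x) (j : ℕ) : ∀ x ∈ negPrefix j s, p x := by
  simp only [negPrefix, mem_append, mem_map]
  rintro x (⟨y, hy, rfl⟩ | hx)
  · exact hp y (hs y (mem_of_mem_take hy))
  · exact hs x (mem_of_mem_drop hx)

theorem sum_take_negPrefix {i j : ℕ} (hij : i ≤ j) (s : List α) :
    ((negPrefix j s).take i).sum = -(s.take i).sum := by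
  rw [take_negPrefix hij, sum_neg]

section FirstHit

open scoped Classical

noncomputable def reflectAtFirstHit (c : α) (s : List α) : List α :=
  if h : ∃ j, (s.take j).sum = c then negPrefix (Nat.find h) s else s

variable {c : α} {s : List α}

theorem reflectAtFirstHit_eq (h : ∃ j, (s.take j).sum = c) :
    reflectAtFirstHit c s = negPrefix (Nat.find h) s := by
  rw [reflectAtFirstHit, dif_pos h]

theorem find_sum_take_le_length (h : ∃ j, (s.take j).sum = c) : Nat.find h ≤ s.length := by
  by_contra! hlt
  refine Nat.find_min h hlt ?_
  simpa [take_of_length_le hlt.le] using Nat.find_spec h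

theorem length_reflectAtFirstHit (c : α) (s : List α) :
    (reflectAtFirstHit c s).length = s.length := by
  unfold reflectAtFirstHit
  split_ifs
  exacts [length_negPrefix _ s, rfl]

theorem forall_mem_reflectAtFirstHit {p : α → Prop} (hp : ∀ x, p x → p (-x))
    (hs : ∀ x ∈ s, p x) (c : α) : ∀ x ∈ reflectAtFirstHit c s, p x := by
  unfold reflectAtFirstHit
  split_ifs
  exacts [forall_mem_negPrefix hp hs _, hs]

theorem sum_reflectAtFirstHit (h : ∃ j, (s.take j).sum = c) :
    (reflectAtFirstHit c s).sum = s.sum - 2 • c := by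
  rw [reflectAtFirstHit_eq h, sum_negPrefix, ← sum_take_add_sum_drop s (Nat.find h),
    Nat.find_spec h]
  abel

theorem sum_take_find_reflectAtFirstHit (h : ∃ j, (s.take j).sum = c) :
    ((reflectAtFirstHit c s).take (Nat.find h)).sum = -c := by
  rw [reflectAtFirstHit_eq h, sum_take_negPrefix le_rfl, Nat.find_spec h]

theorem reflectAtFirstHit_neg_reflectAtFirstHit (h : ∃ j, (s.take j).sum = c) :
    reflectAtFirstHit (-c) (reflectAtFirstHit c s) = s := by
  have h' : ∃ i, ((reflectAtFirstHit c s).take i).sum = -c :=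
    ⟨_, sum_take_find_reflectAtFirstHit h⟩
  have hfind : Nat.find h' = Nat.find h := by
    refine (Nat.find_eq_iff h').2 ⟨sum_take_find_reflectAtFirstHit h, fun i hi => ?_⟩
    rw [reflectAtFirstHit_eq h, sum_take_negPrefix hi.le, neg_inj]
    exact Nat.find_min h hi
  rw [reflectAtFirstHit_eq h', hfind, reflectAtFirstHit_eq h, negPrefix_negPrefix]

theorem exists_sum_take_reflectAtFirstHit (h : ∃ j, (s.take j).sum = c) :
    ∃ j ≤ s.length, ((reflectAtFirstHit c s).take j).sum = -c :=
  ⟨Nat.find h, find_sum_take_le_length h, sum_take_find_reflectAtFirstHit h⟩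

end FirstHit

theorem exists_sum_take_eq {s : List ℤ} (hs : ∀ x ∈ s, x ≤ 1) {c : ℤ} (hc₀ : 0 ≤ c)
    (hc : c ≤ s.sum) : ∃ j, (s.take j).sum = c := by
  induction s generalizing c with
  | nil => exact ⟨0, by simpa using le_antisymm hc₀ hc⟩
  | cons x s ih =>
    rcases hc₀.eq_or_lt with rfl | hc_pos
    · exact ⟨0, rfl⟩
    · have hx := hs x mem_cons_self
      rw [sum_cons] at hc
      obtain ⟨j, hj⟩ := ih (fun y hy => hs y (mem_cons_of_mem x hy)) (c := c - x)
        (by omega) (by omega)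
      exact ⟨j + 1, by simp [hj]⟩

end List

/-- Mirimanoff's reflection principle (1923): for positive integers `a, b` and
length `N`, the number of ±1 walks of length `N` from `a` to `b` that visit `0`
equals the number of ±1 walks of length `N` from `−a` to `b`. -/
theorem reflection_principle (a b : ℤ) (ha : 0 < a) (hb : 0 < b) (N : ℕ) :
    {s : List ℤ | s.length = N ∧ (∀ x ∈ s, x = 1 ∨ x = -1) ∧
        a + s.sum = b ∧ ∃ j ≤ N, a + (s.take j).sum = 0}.ncard
      = {s : List ℤ | s.length = N ∧ (∀ x ∈ s, x = 1 ∨ x = -1) ∧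
          s.sum = a + b}.ncard := by
  have step_neg : ∀ x : ℤ, x = 1 ∨ x = -1 → -x = 1 ∨ -x = -1 := by omega
  have hits_neg_a : ∀ s : List ℤ, (∃ j ≤ N, a + (s.take j).sum = 0) →
      ∃ j, (s.take j).sum = -a := fun s ⟨j, _, hj⟩ => ⟨j, by omega⟩
  have hits_a : ∀ s : List ℤ, (∀ x ∈ s, x = 1 ∨ x = -1) → s.sum = a + b →
      ∃ j, (s.take j).sum = a := fun s hs hsum =>
    List.exists_sum_take_eq (fun x hx => by have := hs x hx; omega) ha.le (by omega)
  refine Set.BijOn.ncard_eq (f := List.reflectAtFirstHit (-a))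
    (Set.InvOn.bijOn (f' := List.reflectAtFirstHit a) ⟨?_, ?_⟩ ?_ ?_)
  · rintro s ⟨-, -, -, hvisit⟩
    simpa using List.reflectAtFirstHit_neg_reflectAtFirstHit (hits_neg_a s hvisit)
  · rintro t ⟨-, hpm, hsum⟩
    exact List.reflectAtFirstHit_neg_reflectAtFirstHit (hits_a t hpm hsum)
  · rintro s ⟨hlen, hpm, hsum, hvisit⟩
    have h := hits_neg_a s hvisit
    refine ⟨by rw [List.length_reflectAtFirstHit, hlen],
      List.forall_mem_reflectAtFirstHit step_neg hpm _, ?_⟩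
    rw [List.sum_reflectAtFirstHit h, two_nsmul]
    omega
  · rintro t ⟨hlen, hpm, hsum⟩
    have h := hits_a t hpm hsum
    obtain ⟨j, hjN, hj⟩ := List.exists_sum_take_reflectAtFirstHit h
    refine ⟨by rw [List.length_reflectAtFirstHit, hlen],
      List.forall_mem_reflectAtFirstHit step_neg hpm _, ?_, j, hlen ▸ hjN, ?_⟩
    · rw [List.sum_reflectAtFirstHit h, two_nsmul]
      omega
    · rw [hj, add_neg_cancel]
end

section
/- For every real number α with −π/2 ≤ α ≤ π/2, the series ∑_{n≥0} (C_n / 4^n) · (sin α)^{2n+3} converges and its sum equals 2·sin α − sin(2α); equivalently, sin(2α) = 2 sin α − ∑_{n=1}^∞ (C_{n−1}/4^{n−1}) sin^{2n+1} α. (Ming Antu's identity, c. 1730s.) -/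
/-!
With `x = sin α` and `t = x² / 4` the right-hand side is `2x(1 - √(1 - x²))`, so the claim is
`2t · C(t) = 1 - √(1 - 4t)` for the Catalan generating function `C(t) = ∑ Cₙ tⁿ`.
The series converges absolutely on `|t| ≤ 1/4` because `Cₙ / 4ⁿ = 2(bₙ - bₙ₊₁)`
telescopes, where `bₙ = binom(2n, n) / 4ⁿ`. The Cauchy product and Segner's recurrence give
`C = 1 + t C²`, and the bound `|2t C(t)| ≤ 1` selects the root `1 - √(1 - 4t)`.
-/

open Real Finset

theorem catalan_div_four_pow_eq_sub (n : ℕ) :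
    (catalan n : ℝ) / 4 ^ n =
      2 * ((n.centralBinom : ℝ) / 4 ^ n - ((n + 1).centralBinom : ℝ) / 4 ^ (n + 1)) := by
  have hn : (n : ℝ) + 1 ≠ 0 := by positivity
  have hcat : (catalan n : ℝ) = n.centralBinom / (n + 1) := by
    rw [eq_div_iff hn, mul_comm]
    exact_mod_cast succ_mul_catalan_eq_centralBinom n
  have hbinom : ((n + 1).centralBinom : ℝ) = 2 * (2 * n + 1) * n.centralBinom / (n + 1) := by
    rw [eq_div_iff hn, mul_comm]
    exact_mod_cast Nat.succ_mul_centralBinom_succ n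
  rw [hcat, hbinom, pow_succ]
  field_simp
  ring

theorem sum_range_catalan_div_four_pow_le (N : ℕ) :
    ∑ n ∈ range N, (catalan n : ℝ) / 4 ^ n ≤ 2 := by
  simp_rw [catalan_div_four_pow_eq_sub, ← mul_sum,
    sum_range_sub' (fun n => (n.centralBinom : ℝ) / 4 ^ n)]
  simp only [Nat.centralBinom_zero, Nat.cast_one, pow_zero, div_one]
  have : (0 : ℝ) ≤ (N.centralBinom : ℝ) / 4 ^ N := by positivity
  linarith

theorem summable_catalan_div_four_pow : Summable fun n => (catalan n : ℝ) / 4 ^ n :=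
  summable_of_sum_range_le (fun _ => by positivity) sum_range_catalan_div_four_pow_le

theorem tsum_catalan_div_four_pow_le : ∑' n, (catalan n : ℝ) / 4 ^ n ≤ 2 :=
  Real.tsum_le_of_sum_range_le (fun _ => by positivity) sum_range_catalan_div_four_pow_le

section GeneratingFunction

variable {t : ℝ}

theorem norm_catalan_mul_pow_le (ht : |t| ≤ 1 / 4) (n : ℕ) :
    ‖(catalan n : ℝ) * t ^ n‖ ≤ (catalan n : ℝ) / 4 ^ n := by
  rw [norm_mul, norm_pow, Real.norm_natCast, Real.norm_eq_abs, div_eq_mul_one_div, ← one_div_pow]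
  gcongr

theorem summable_norm_catalan_mul_pow (ht : |t| ≤ 1 / 4) :
    Summable fun n => ‖(catalan n : ℝ) * t ^ n‖ :=
  summable_catalan_div_four_pow.of_nonneg_of_le (fun _ => norm_nonneg _)
    (norm_catalan_mul_pow_le ht)

theorem abs_tsum_catalan_mul_pow_le (ht : |t| ≤ 1 / 4) :
    |∑' n, (catalan n : ℝ) * t ^ n| ≤ 2 :=
  calc |∑' n, (catalan n : ℝ) * t ^ n|
      ≤ ∑' n, ‖(catalan n : ℝ) * t ^ n‖ :=
        norm_tsum_le_tsum_norm (summable_norm_catalan_mul_pow ht)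
    _ ≤ ∑' n, (catalan n : ℝ) / 4 ^ n :=
        (summable_norm_catalan_mul_pow ht).tsum_le_tsum (norm_catalan_mul_pow_le ht)
          summable_catalan_div_four_pow
    _ ≤ 2 := tsum_catalan_div_four_pow_le

theorem tsum_catalan_mul_pow_eq_one_add (h : Summable fun n => ‖(catalan n : ℝ) * t ^ n‖) :
    ∑' n, (catalan n : ℝ) * t ^ n = 1 + t * (∑' n, (catalan n : ℝ) * t ^ n) ^ 2 := by
  have hsq : (∑' n, (catalan n : ℝ) * t ^ n) ^ 2 = ∑' n, (catalan (n + 1) : ℝ) * t ^ n := by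
    rw [sq, tsum_mul_tsum_eq_tsum_sum_antidiagonal_of_summable_norm h h]
    refine tsum_congr fun n => ?_
    rw [catalan_succ', Nat.cast_sum, sum_mul]
    refine sum_congr rfl fun kl hkl => ?_
    rw [← mem_antidiagonal.mp hkl, pow_add, Nat.cast_mul]
    ring
  rw [hsq, (Summable.of_norm h).tsum_eq_zero_add, ← tsum_mul_left]
  simp only [catalan_zero, Nat.cast_one, pow_zero, mul_one, pow_succ]
  congr 1
  exact tsum_congr fun n => by ring

theorem two_mul_mul_tsum_catalan_mul_pow (ht : |t| ≤ 1 / 4) :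
    2 * t * ∑' n, (catalan n : ℝ) * t ^ n = 1 - √(1 - 4 * t) := by
  set S := ∑' n, (catalan n : ℝ) * t ^ n
  have hquad : S = 1 + t * S ^ 2 :=
    tsum_catalan_mul_pow_eq_one_add (summable_norm_catalan_mul_pow ht)
  have hroot : (2 * t * S - 1) ^ 2 = √(1 - 4 * t) ^ 2 := by
    rw [Real.sq_sqrt (by linarith [le_abs_self t])]
    linear_combination -4 * t * hquad
  -- `2tS - 1 = √(1 - 4t) ≥ 0` would force `2tS = 1`, since `|2tS| ≤ 4|t| ≤ 1`.
  have hbound : 2 * t * S ≤ 1 := by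
    have := mul_le_mul ht (abs_tsum_catalan_mul_pow_le ht) (abs_nonneg S) (by norm_num)
    rw [← abs_mul] at this
    linarith [le_abs_self (t * S)]
  rcases sq_eq_sq_iff_eq_or_eq_neg.mp hroot with h | h <;> linarith [Real.sqrt_nonneg (1 - 4 * t)]

end GeneratingFunction

/-- Ming Antu's identity (c. 1730s): for `−π/2 ≤ α ≤ π/2`,
`∑_{n≥0} (Cₙ/4ⁿ)·(sin α)^{2n+3} = 2·sin α − sin(2α)`. -/
theorem mingantu (α : ℝ) (h1 : -(π / 2) ≤ α) (h2 : α ≤ π / 2) :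
    HasSum (fun n : ℕ => (catalan n : ℝ) / 4 ^ n * Real.sin α ^ (2 * n + 3))
      (2 * Real.sin α - Real.sin (2 * α)) := by
  set x := Real.sin α
  have ht : |x ^ 2 / 4| ≤ 1 / 4 := by
    rw [abs_of_nonneg (by positivity)]
    linarith [Real.sin_sq_le_one α]
  have hsum := ((summable_norm_catalan_mul_pow ht).of_norm.hasSum).mul_left (x ^ 3)
  have hterm : ∀ n : ℕ, x ^ 3 * ((catalan n : ℝ) * (x ^ 2 / 4) ^ n) =
      (catalan n : ℝ) / 4 ^ n * x ^ (2 * n + 3) := fun n => by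
    rw [div_pow, pow_add, pow_mul]
    ring
  have hvalue :
      x ^ 3 * ∑' n, (catalan n : ℝ) * (x ^ 2 / 4) ^ n = 2 * x - Real.sin (2 * α) := by
    have := two_mul_mul_tsum_catalan_mul_pow ht
    rw [mul_div_cancel₀ _ four_ne_zero] at this
    rw [Real.sin_two_mul, Real.cos_eq_sqrt_one_sub_sin_sq h1 h2]
    linear_combination 2 * x * this
  simpa only [hterm, hvalue] using hsum
end

section
/- For every real number x with |x| < 1/4, the series ∑_{n≥0} 2·C_n·x^{n+1} converges with sum 1 − √(1 − 4x); equivalently, √(1−4x) = 1 − (1/2)·4x − (1·1)/(2·4)·4²x² − (1·1·3)/(2·4·6)·4³x³ − ⋯ . (Euler's binomial series expansion of √(1−4x), 1751.) -/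
open Finset

lemma cat_partial (n : ℕ) :
    ∑ k ∈ range n, (catalan k : ℝ) / 4 ^ k = 2 - 2 * ((Nat.centralBinom n : ℝ) / 4 ^ n) := by
  induction n with
  | zero => norm_num
  | succ n ih =>
    have hn : ((n:ℝ) + 1) ≠ 0 := by positivity
    have e1 : (catalan n : ℝ) = (Nat.centralBinom n : ℝ) / ((n:ℝ) + 1) := by
      rw [eq_div_iff hn, mul_comm]
      exact_mod_cast congrArg (Nat.cast : ℕ → ℝ) (succ_mul_catalan_eq_centralBinom n)
    have e2 : (Nat.centralBinom (n+1) : ℝ)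
        = 2 * (2*(n:ℝ)+1) * (Nat.centralBinom n : ℝ) / ((n:ℝ) + 1) := by
      rw [eq_div_iff hn]
      have := congrArg (Nat.cast : ℕ → ℝ) (Nat.succ_mul_centralBinom_succ n)
      push_cast at this
      linarith [this]
    rw [sum_range_succ, ih, e1, e2, pow_succ]
    have h4 : (4:ℝ)^n ≠ 0 := by positivity
    field_simp
    ring

lemma cat_sum_le (n : ℕ) : ∑ k ∈ range n, (catalan k : ℝ) / 4 ^ k ≤ 2 := by
  rw [cat_partial]
  have : (0:ℝ) ≤ (Nat.centralBinom n : ℝ) / 4 ^ n := by positivity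
  linarith

lemma cat_summable : Summable (fun k : ℕ => (catalan k : ℝ) / 4 ^ k) :=
  summable_of_sum_range_le (fun k => by positivity) cat_sum_le

lemma cat_tsum_le : ∑' k : ℕ, (catalan k : ℝ) / 4 ^ k ≤ 2 :=
  Real.tsum_le_of_sum_range_le (fun k => by positivity) cat_sum_le

/-- Euler's binomial series expansion of `√(1−4x)` (1751): for `|x| < 1/4`,
`∑_{n≥0} 2·Cₙ·x^{n+1} = 1 − √(1 − 4x)`. -/
theorem euler_sqrt_expansion (x : ℝ) (hx : |x| < 1 / 4) :
    HasSum (fun n : ℕ => 2 * (catalan n : ℝ) * x ^ (n + 1))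
      (1 - Real.sqrt (1 - 4 * x)) := by
  set f : ℕ → ℝ := fun n => 2 * (catalan n : ℝ) * x ^ (n + 1) with hf
  have hb : ∀ n : ℕ, ‖f n‖ ≤ 2 * |x| * ((catalan n : ℝ) / 4 ^ n) := by
    intro n
    have h1 : ‖f n‖ = 2 * (catalan n : ℝ) * (|x| * |x| ^ n) := by
      rw [Real.norm_eq_abs, abs_mul, abs_mul, abs_pow,
        abs_of_nonneg (by norm_num : (0:ℝ) ≤ 2), Nat.abs_cast, pow_succ]
      ring
    rw [h1]
    have h2 : |x| ^ n ≤ (1/4 : ℝ) ^ n := pow_le_pow_left₀ (abs_nonneg x) hx.le n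
    have hc : (0:ℝ) ≤ (catalan n : ℝ) := by positivity
    calc 2 * (catalan n : ℝ) * (|x| * |x| ^ n)
        ≤ 2 * (catalan n : ℝ) * (|x| * (1/4 : ℝ) ^ n) := by
          gcongr
      _ = 2 * |x| * ((catalan n : ℝ) / 4 ^ n) := by
          rw [div_pow]
          ring
  have hsum2 : Summable (fun n : ℕ => 2 * |x| * ((catalan n : ℝ) / 4 ^ n)) :=
    cat_summable.mul_left _
  have hnorm : Summable (fun n : ℕ => ‖f n‖) :=
    Summable.of_nonneg_of_le (fun n => norm_nonneg _) hb hsum2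
  have hsumf : Summable f := hnorm.of_norm
  set S : ℝ := ∑' n, f n with hSdef
  have hS : HasSum f S := hsumf.hasSum
  -- bound on S
  have hS1 : S < 1 := by
    have h1 : |S| ≤ ∑' n, ‖f n‖ := by
      simpa [Real.norm_eq_abs] using norm_tsum_le_tsum_norm hnorm
    have h2 : ∑' n, ‖f n‖ ≤ ∑' n, 2 * |x| * ((catalan n : ℝ) / 4 ^ n) :=
      Summable.tsum_le_tsum hb hnorm hsum2
    have h3 : ∑' n : ℕ, 2 * |x| * ((catalan n : ℝ) / 4 ^ n)
        = 2 * |x| * ∑' n : ℕ, (catalan n : ℝ) / 4 ^ n := tsum_mul_left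
    have h4 : 2 * |x| * ∑' n : ℕ, (catalan n : ℝ) / 4 ^ n ≤ 2 * |x| * 2 := by
      have := cat_tsum_le
      have hx0 : (0:ℝ) ≤ 2 * |x| := by positivity
      nlinarith
    have := le_abs_self S
    nlinarith
  -- Cauchy product
  have hc : ∀ n : ℕ, ((catalan (n+1) : ℝ))
      = ∑ kl ∈ antidiagonal n, (catalan kl.1 : ℝ) * (catalan kl.2 : ℝ) := by
    intro n
    rw [catalan_succ']
    push_cast
    rfl
  have hanti : ∀ n : ℕ, ∑ kl ∈ antidiagonal n, f kl.1 * f kl.2 = 2 * f (n+1) := by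
    intro n
    have step : ∀ kl ∈ antidiagonal n,
        f kl.1 * f kl.2 = ((catalan kl.1 : ℝ) * (catalan kl.2 : ℝ)) * (4 * x ^ (n+2)) := by
      intro kl hkl
      have hk : kl.1 + kl.2 = n := by simpa using hkl
      have hxp : x ^ (kl.1 + 1) * x ^ (kl.2 + 1) = x ^ (n + 2) := by
        rw [← pow_add]
        congr 1
        omega
      calc f kl.1 * f kl.2
          = ((catalan kl.1 : ℝ) * (catalan kl.2 : ℝ)) * (4 * (x ^ (kl.1+1) * x ^ (kl.2+1))) := by
            simp only [hf]; ring
        _ = ((catalan kl.1 : ℝ) * (catalan kl.2 : ℝ)) * (4 * x ^ (n+2)) := by rw [hxp]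
    rw [Finset.sum_congr rfl step, ← Finset.sum_mul, ← hc]
    simp only [hf]
    ring
  have hmul : S * S = ∑' n, ∑ kl ∈ antidiagonal n, f kl.1 * f kl.2 :=
    tsum_mul_tsum_eq_tsum_sum_antidiagonal_of_summable_norm hnorm hnorm
  have hshift : HasSum (fun n => f (n+1)) (S - 2*x) := by
    have h0 : ∑ i ∈ range 1, f i = 2 * x := by
      simp [hf]
    have h1 := (hasSum_nat_add_iff' (f := f) 1).mpr hS
    rwa [h0] at h1
  have hSS : S * S = 2 * S - 4 * x := by
    rw [hmul, tsum_congr hanti, tsum_mul_left, hshift.tsum_eq]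
    ring
  have heq : (1 - S)^2 = 1 - 4 * x := by nlinarith [hSS]
  have hpos : (0:ℝ) ≤ 1 - S := by linarith
  have hsqrt : Real.sqrt (1 - 4 * x) = 1 - S := by
    rw [← heq, Real.sqrt_sq hpos]
  rw [hsqrt, sub_sub_cancel]
  exact hS
end
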